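/- Consider four agents and eight indivisible chores e_1, ..., e_8 with additive valuations: v_1(e_j) = v_2(e_j) = -10 for all j ∈ {1, ..., 8}; v_3(e_1) = v_4(e_1) = -73 and v_3(e_j) = v_4(e_j) = -1 for all j ∈ {2, ..., 8}. Then no allocation of the eight chores to the four agents is simultaneously envy-free up to one item, equitable up to one item, and Pareto optimal. -/

import Mathlib

/-!
Agents 0 and 1 are indifferent between all chores, while agents 2 and 3 find chore 0 very
costly. If agent 2 or 3 holds chore 0, Pareto optimality leaves agents 0 and 1 empty-handed
(swapping chore 0 with any of their chores would help its holder and cost them nothing), and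
EQ1 towards an empty-handed agent allows agents 2 and 3 at most one chore each. If agent 0
or 1 holds chore 0, EQ1 towards agent 2, whose bundle costs it at most 8, allows agents 0 and
1 at most one chore each, and EF1 of agents 2 and 3 towards whichever of them lacks chore 0
allows them at most two. Either way some of the eight chores are left unallocated.
-/
open Finset

attribute [local instance] Classical.propDecidable

noncomputable section

/-- The bundle of agent `i` under deterministic allocation `A`. -/
def bundle {m n : ℕ} (A : Fin m → Fin n) (i : Fin n) : Finset (Fin m) :=
  Finset.univ.filter fun j => A j = i

/-- Additive value of a bundle. -/
def sval {m : ℕ} (f : Fin m → ℝ) (S : Finset (Fin m)) : ℝ := ∑ j ∈ S, f j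

/-- Envy-freeness up to one item. -/
def EF1 {m n : ℕ} (v : Fin n → Fin m → ℝ) (A : Fin m → Fin n) : Prop :=
  ∀ i j : Fin n, sval (v i) (bundle A i) ≥ sval (v i) (bundle A j) ∨
    ∃ e ∈ bundle A i ∪ bundle A j,
      sval (v i) ((bundle A i).erase e) ≥ sval (v i) ((bundle A j).erase e)

/-- Equitability up to one item. -/
def EQ1 {m n : ℕ} (v : Fin n → Fin m → ℝ) (A : Fin m → Fin n) : Prop :=
  ∀ i j : Fin n, sval (v i) (bundle A i) ≥ sval (v j) (bundle A j) ∨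
    ∃ e ∈ bundle A i ∪ bundle A j,
      sval (v i) ((bundle A i).erase e) ≥ sval (v j) ((bundle A j).erase e)

/-- Deterministic allocation `B` Pareto dominates `A`. -/
def ParetoDom {m n : ℕ} (v : Fin n → Fin m → ℝ) (B A : Fin m → Fin n) : Prop :=
  (∀ i, sval (v i) (bundle B i) ≥ sval (v i) (bundle A i)) ∧
  ∃ i, sval (v i) (bundle B i) > sval (v i) (bundle A i)

/-- Pareto optimality. -/
def ParetoOpt {m n : ℕ} (v : Fin n → Fin m → ℝ) (A : Fin m → Fin n) : Prop :=
  ¬ ∃ B, ParetoDom v B A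

section UpToOne

variable {m : ℕ} {f g : Fin m → ℝ} {S T : Finset (Fin m)}

/-- The common shape of `EF1` (where `g = f`) and `EQ1`. -/
def GeUpToOne (f g : Fin m → ℝ) (S T : Finset (Fin m)) : Prop :=
  sval f S ≥ sval g T ∨ ∃ e ∈ S ∪ T, sval f (S.erase e) ≥ sval g (T.erase e)

theorem GeUpToOne.exists_subset (h : GeUpToOne f g S T) :
    ∃ S' ⊆ S, #S ≤ #S' + 1 ∧ ∃ T' ⊆ T, sval g T' ≤ sval f S' := by
  rcases h with h | ⟨e, -, h⟩
  · exact ⟨S, subset_rfl, by omega, T, subset_rfl, h⟩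
  · have := pred_card_le_card_erase (s := S) (a := e)
    exact ⟨S.erase e, erase_subset _ _, by omega, T.erase e, erase_subset _ _, h⟩

theorem GeUpToOne.card_le_one {c d : ℝ} (h : GeUpToOne f g S T) (hf : ∀ e ∈ S, f e ≤ -c)
    (hg : ∀ e ∈ T, -d ≤ g e) (hd : 0 ≤ d) (hcd : d * #T < c) : #S ≤ 1 := by
  obtain ⟨S', hS', hcard, T', hT', hle⟩ := h.exists_subset
  have hfS' : sval f S' ≤ #S' * -c := by
    simpa [sval] using sum_le_card_nsmul S' f (-c) fun e he ↦ hf e (hS' he)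
  have hgT' : #T' * -d ≤ sval g T' := by
    simpa [sval] using card_nsmul_le_sum T' g (-d) fun e he ↦ hg e (hT' he)
  have hT'T : (#T' : ℝ) ≤ #T := by exact_mod_cast card_le_card hT'
  have hc : 0 < c := lt_of_le_of_lt (by positivity) hcd
  have : c * #S' < c * 1 :=
    calc c * #S' ≤ d * #T' := by linarith
      _ ≤ d * #T := by gcongr
      _ < c * 1 := by linarith
  have : (#S' : ℝ) < 1 := lt_of_mul_lt_mul_left this hc.le
  have : #S' < 1 := by exact_mod_cast this
  omega

theorem GeUpToOne.card_le_one_of_empty (h : GeUpToOne f g S ∅) (hf : ∀ e ∈ S, f e < 0) :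
    #S ≤ 1 := by
  obtain ⟨S', hS', hcard, T', hT', hle⟩ := h.exists_subset
  rw [subset_empty.1 hT'] at hle
  have : S' = ∅ := by
    by_contra hne
    have := sum_neg (fun e he ↦ hf e (hS' he)) (nonempty_iff_ne_empty.2 hne)
    simp only [sval, sum_empty] at hle
    linarith
  simpa [this] using hcard

theorem GeUpToOne.card_le_card_add_one {c : ℝ} (h : GeUpToOne f g S T) (hc : 0 < c)
    (hf : ∀ e ∈ S, f e = -c) (hg : ∀ e ∈ T, g e = -c) : #S ≤ #T + 1 := by
  obtain ⟨S', hS', hcard, T', hT', hle⟩ := h.exists_subset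
  have hfS' : sval f S' = #S' * -c := by
    simpa [sval] using sum_eq_card_nsmul fun e he ↦ hf e (hS' he)
  have hgT' : sval g T' = #T' * -c := by
    simpa [sval] using sum_eq_card_nsmul fun e he ↦ hg e (hT' he)
  have : (#S' : ℝ) ≤ #T' := by nlinarith
  have : #S' ≤ #T' := by exact_mod_cast this
  have := card_le_card hT'
  omega

end UpToOne

section Allocation

variable {m n : ℕ} {v : Fin n → Fin m → ℝ} {A : Fin m → Fin n}

@[simp]
theorem mem_bundle {j : Fin m} {i : Fin n} : j ∈ bundle A i ↔ A j = i := by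
  simp [bundle]

theorem EF1.geUpToOne (h : EF1 v A) (i j : Fin n) :
    GeUpToOne (v i) (v i) (bundle A i) (bundle A j) :=
  h i j

theorem EQ1.geUpToOne (h : EQ1 v A) (i j : Fin n) :
    GeUpToOne (v i) (v j) (bundle A i) (bundle A j) :=
  h i j

theorem sum_card_bundle (A : Fin m → Fin n) : ∑ i, #(bundle A i) = m := by
  simpa [bundle] using (card_eq_sum_card_fiberwise (f := A) (s := univ) (t := univ)
    fun x _ ↦ mem_univ (A x)).symm

theorem sval_bundle_comp_symm (f : Fin m → ℝ) (σ : Equiv.Perm (Fin m)) (i : Fin n) :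
    sval f (bundle (A ∘ σ.symm) i) = ∑ j ∈ bundle A i, f (σ j) := by
  have : bundle (A ∘ σ.symm) i = (bundle A i).map σ.toEmbedding := by
    ext j
    simp [mem_map_equiv]
  rw [this, sval, sum_map]
  rfl

theorem ParetoOpt.le_of_indifferent (hA : ParetoOpt v A) {a b : Fin m}
    (hb : v (A b) a = v (A b) b) : v (A a) b ≤ v (A a) a := by
  by_contra! hlt
  have hswap : ∀ i, ∀ j ∈ bundle A i, v i j ≤ v i (Equiv.swap a b j) := by
    intro i j hj
    rw [mem_bundle] at hj
    subst hj
    rcases eq_or_ne j a with rfl | hja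
    · simpa using hlt.le
    rcases eq_or_ne j b with rfl | hjb
    · simp [hb]
    · rw [Equiv.swap_apply_of_ne_of_ne hja hjb]
  -- Swapping `a` and `b` helps the holder of `a` and costs nobody anything.
  refine hA ⟨A ∘ (Equiv.swap a b).symm, fun i ↦ ?_, A a, ?_⟩
  · rw [sval_bundle_comp_symm]
    exact sum_le_sum (hswap i)
  · rw [sval_bundle_comp_symm]
    exact sum_lt_sum (hswap _) ⟨a, mem_bundle.2 rfl, by simpa using hlt⟩

theorem ParetoOpt.bundle_eq_empty_of_indifferent (hA : ParetoOpt v A) {i : Fin n} {a : Fin m}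
    {c : ℝ} (hi : ∀ j, v i j = c) (hprefer : ∀ j ≠ a, v (A a) a < v (A a) j) (hai : A a ≠ i) :
    bundle A i = ∅ := by
  refine eq_empty_of_forall_notMem fun j hj ↦ ?_
  rw [mem_bundle] at hj
  have hja : j ≠ a := by rintro rfl; exact hai hj
  have := hA.le_of_indifferent (a := a) (b := j) (by rw [hj, hi, hi])
  exact (hprefer j hja).not_ge this

end Allocation

theorem not_EF1_and_EQ1_of_uniform_holds_zero (v : Fin 4 → Fin 8 → ℝ)
    (h1 : ∀ j, v 0 j = -10) (h2 : ∀ j, v 1 j = -10)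
    (h5 : ∀ j : Fin 8, j ≠ 0 → v 2 j = -1) (h6 : ∀ j : Fin 8, j ≠ 0 → v 3 j = -1)
    (A : Fin 8 → Fin 4) (hA : A 0 = 0 ∨ A 0 = 1) : ¬ (EF1 v A ∧ EQ1 v A) := by
  rintro ⟨hEF, hEQ⟩
  have hlight : ∀ r : Fin 4, r = 2 ∨ r = 3 → ∀ j ≠ 0, v r j = -1 := by
    rintro r (rfl | rfl)
    exacts [h5, h6]
  have hne_zero : ∀ {i e}, e ∈ bundle A i → A 0 ≠ i → e ≠ 0 := by
    rintro i e he hi rfl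
    exact hi (mem_bundle.1 he)
  obtain ⟨q, hq, hAq⟩ : ∃ q, (∀ j, v q j = -10) ∧ A 0 ≠ q := by
    rcases hA with hA | hA
    exacts [⟨1, h2, by omega⟩, ⟨0, h1, by omega⟩]
  have hcard2 : (#(bundle A 2) : ℝ) ≤ 8 := by
    exact_mod_cast (card_le_univ (bundle A 2)).trans_eq (Fintype.card_fin 8)
  have huniform_card : ∀ i, (∀ j, v i j = -10) → #(bundle A i) ≤ 1 := fun i hi ↦
    (hEQ.geUpToOne i 2).card_le_one (c := 10) (d := 1) (fun e _ ↦ (hi e).le)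
      (fun e he ↦ (hlight 2 (.inl rfl) e (hne_zero he (by omega))).ge) zero_le_one
      (by linarith)
  have hlight_card : ∀ r, r = 2 ∨ r = 3 → #(bundle A r) ≤ #(bundle A q) + 1 := fun r hr ↦
    (hEF.geUpToOne r q).card_le_card_add_one one_pos
      (fun e he ↦ hlight r hr e (hne_zero he (by omega)))
      (fun e he ↦ hlight r hr e (hne_zero he hAq))
  have := huniform_card 0 h1
  have := huniform_card 1 h2
  have := huniform_card q hq
  have := hlight_card 2 (.inl rfl)
  have := hlight_card 3 (.inr rfl)
  have hsum := sum_card_bundle A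
  rw [Fin.sum_univ_four] at hsum
  omega

theorem not_EQ1_and_ParetoOpt_of_light_holds_zero (v : Fin 4 → Fin 8 → ℝ)
    (h1 : ∀ j, v 0 j = -10) (h2 : ∀ j, v 1 j = -10)
    (h3 : v 2 0 = -73) (h4 : v 3 0 = -73)
    (h5 : ∀ j : Fin 8, j ≠ 0 → v 2 j = -1) (h6 : ∀ j : Fin 8, j ≠ 0 → v 3 j = -1)
    (A : Fin 8 → Fin 4) (hA : A 0 = 2 ∨ A 0 = 3) : ¬ (EQ1 v A ∧ ParetoOpt v A) := by
  rintro ⟨hEQ, hPO⟩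
  have hlight : ∀ r : Fin 4, r = 2 ∨ r = 3 → v r 0 = -73 ∧ ∀ j ≠ 0, v r j = -1 := by
    rintro r (rfl | rfl)
    exacts [⟨h3, h5⟩, ⟨h4, h6⟩]
  have hprefer : ∀ j ≠ 0, v (A 0) 0 < v (A 0) j := fun j hj ↦ by
    rw [(hlight _ hA).1, (hlight _ hA).2 j hj]
    norm_num
  have hidle0 := hPO.bundle_eq_empty_of_indifferent h1 hprefer (by omega)
  have hidle1 := hPO.bundle_eq_empty_of_indifferent h2 hprefer (by omega)
  have hlight_card : ∀ r, r = 2 ∨ r = 3 → #(bundle A r) ≤ 1 := fun r hr ↦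
    (hidle0 ▸ hEQ.geUpToOne r 0).card_le_one_of_empty fun e _ ↦ by
      by_cases he : e = 0 <;> simp [he, hlight r hr]
  have := hlight_card 2 (.inl rfl)
  have := hlight_card 3 (.inr rfl)
  have hsum := sum_card_bundle A
  rw [Fin.sum_univ_four, hidle0, hidle1, card_empty] at hsum
  omega

/-- for four agents and eight chores, with agents 1 and 2 valuing every chore
at -10, and agents 3 and 4 valuing chore e₁ at -73 and every other chore at -1, no
allocation is simultaneously EF1, EQ1 and Pareto optimal. -/
theorem no_EF1_EQ1_PO_four_agents (v : Fin 4 → Fin 8 → ℝ)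
    (h1 : ∀ j, v 0 j = -10) (h2 : ∀ j, v 1 j = -10)
    (h3 : v 2 0 = -73) (h4 : v 3 0 = -73)
    (h5 : ∀ j : Fin 8, j ≠ 0 → v 2 j = -1)
    (h6 : ∀ j : Fin 8, j ≠ 0 → v 3 j = -1) :
    ∀ A : Fin 8 → Fin 4, ¬ (EF1 v A ∧ EQ1 v A ∧ ParetoOpt v A) := by
  rintro A ⟨hEF, hEQ, hPO⟩
  rcases (by omega : (A 0 = 0 ∨ A 0 = 1) ∨ A 0 = 2 ∨ A 0 = 3) with hA | hA
  · exact not_EF1_and_EQ1_of_uniform_holds_zero v h1 h2 h5 h6 A hA ⟨hEF, hEQ⟩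
  · exact not_EQ1_and_ParetoOpt_of_light_holds_zero v h1 h2 h3 h4 h5 h6 A hA ⟨hEQ, hPO⟩
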